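/- If the entries of an M×K real matrix U = (μ_{i,k}) with M ≤ K are pairwise distinct, then there exists exactly one stable matching, i.e., exactly one injective map S : {1,…,M} → {1,…,K} such that for every user i and channel k with S(i) ≠ k, if μ_{i,S(i)} < μ_{i,k} then there exists a user i' with S(i') = k and μ_{i',k} > μ_{i,k}. -/
import Mathlib

/-- Auxiliary lemma: unique stable matching on finsets of users/channels,
proved by induction on the number of users, peeling off the pair with
globally maximal utility. -/
theorem aux_stable (M K : ℕ) (U : Fin M → Fin K → ℝ)
    (hdist : Function.Injective (fun p : Fin M × Fin K => U p.1 p.2)) (d : Fin K) :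
    ∀ n : ℕ, ∀ I : Finset (Fin M), ∀ Kc : Finset (Fin K), I.card = n → I.card ≤ Kc.card →
    ∃! S : Fin M → Fin K,
      (∀ i, (i ∈ I → S i ∈ Kc) ∧ (i ∉ I → S i = d)) ∧ Set.InjOn S ↑I ∧
      ∀ i ∈ I, ∀ k ∈ Kc, S i ≠ k → U i (S i) < U i k →
        ∃ i' ∈ I, S i' = k ∧ U i' k > U i k := by
  intro n
  induction n with
  | zero =>
    intro I Kc hcard _
    have hI : I = ∅ := Finset.card_eq_zero.mp hcard
    subst hI
    refine ⟨fun _ => d, ⟨fun i => ⟨fun h => absurd h (Finset.notMem_empty i), fun _ => rfl⟩,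
      by simp [Set.InjOn], by simp⟩, ?_⟩
    rintro T ⟨h1, -, -⟩
    funext i
    exact (h1 i).2 (Finset.notMem_empty i)
  | succ n ih =>
    intro I Kc hcard hle
    have hIne : I.Nonempty := by rw [← Finset.card_pos, hcard]; omega
    have hKne : Kc.Nonempty := Finset.card_pos.mp (by omega)
    obtain ⟨⟨i₀, k₀⟩, hp0, hmax⟩ :=
      Finset.exists_max_image (I ×ˢ Kc) (fun p => U p.1 p.2) (hIne.product hKne)
    obtain ⟨hi₀, hk₀⟩ := Finset.mem_product.mp hp0
    have hmax' : ∀ i ∈ I, ∀ k ∈ Kc, U i k ≤ U i₀ k₀ := fun i hi k hk =>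
      hmax (i, k) (Finset.mem_product.mpr ⟨hi, hk⟩)
    have hstrict : ∀ i ∈ I, ∀ k ∈ Kc, (i, k) ≠ (i₀, k₀) → U i k < U i₀ k₀ :=
      fun i hi k hk hne => lt_of_le_of_ne (hmax' i hi k hk) (fun h => hne (hdist h))
    have hcI : (I.erase i₀).card = n := by
      rw [Finset.card_erase_of_mem hi₀, hcard]; omega
    have hcle : (I.erase i₀).card ≤ (Kc.erase k₀).card := by
      rw [Finset.card_erase_of_mem hi₀, Finset.card_erase_of_mem hk₀]
      omega
    obtain ⟨S', ⟨hS'1, hS'2, hS'3⟩, hS'uniq⟩ := ih (I.erase i₀) (Kc.erase k₀) hcI hcle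
    refine ⟨Function.update S' i₀ k₀, ⟨?_, ?_, ?_⟩, ?_⟩
    · -- values
      intro i
      constructor
      · intro hi
        by_cases h : i = i₀
        · subst h; simp [hk₀]
        · rw [Function.update_of_ne h]
          exact Finset.mem_of_mem_erase ((hS'1 i).1 (Finset.mem_erase.mpr ⟨h, hi⟩))
      · intro hi
        have h : i ≠ i₀ := fun e => hi (e ▸ hi₀)
        rw [Function.update_of_ne h]
        exact (hS'1 i).2 (fun hmem => hi (Finset.mem_of_mem_erase hmem))
    · -- InjOn
      intro i hi j hj hij
      simp only [Finset.coe_sort_coe, Finset.mem_coe] at hi hj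
      by_cases h1 : i = i₀ <;> by_cases h2 : j = i₀
      · rw [h1, h2]
      · exfalso
        subst h1
        rw [Function.update_self, Function.update_of_ne h2] at hij
        have := (hS'1 j).1 (Finset.mem_erase.mpr ⟨h2, hj⟩)
        rw [← hij] at this
        exact (Finset.mem_erase.mp this).1 rfl
      · exfalso
        subst h2
        rw [Function.update_self, Function.update_of_ne h1] at hij
        have := (hS'1 i).1 (Finset.mem_erase.mpr ⟨h1, hi⟩)
        rw [hij] at this
        exact (Finset.mem_erase.mp this).1 rfl
      · rw [Function.update_of_ne h1, Function.update_of_ne h2] at hij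
        exact hS'2 (Finset.mem_erase.mpr ⟨h1, hi⟩) (Finset.mem_erase.mpr ⟨h2, hj⟩) hij
    · -- stability
      intro i hi k hk hne hlt
      by_cases h1 : i = i₀
      · rw [h1, Function.update_self] at hlt
        exact absurd hlt (not_lt.mpr (hmax' i₀ (h1 ▸ hi) k hk))
      · by_cases h2 : k = k₀
        · refine ⟨i₀, hi₀, by rw [Function.update_self, h2], ?_⟩
          rw [h2]
          exact hstrict i hi k₀ hk₀ (by simp [h1])
        · rw [Function.update_of_ne h1] at hne hlt
          obtain ⟨i', hi', hSi', hU⟩ := hS'3 i (Finset.mem_erase.mpr ⟨h1, hi⟩)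
            k (Finset.mem_erase.mpr ⟨h2, hk⟩) hne hlt
          have hi'ne : i' ≠ i₀ := (Finset.mem_erase.mp hi').1
          exact ⟨i', Finset.mem_of_mem_erase hi',
            by rw [Function.update_of_ne hi'ne]; exact hSi', hU⟩
    · -- uniqueness
      rintro T ⟨hT1, hT2, hT3⟩
      have hTi₀ : T i₀ = k₀ := by
        by_contra hne
        have hmem : T i₀ ∈ Kc := (hT1 i₀).1 hi₀
        have hlt : U i₀ (T i₀) < U i₀ k₀ :=
          hstrict i₀ hi₀ (T i₀) hmem (by simp [hne])
        obtain ⟨i', hi', hTi', hU⟩ := hT3 i₀ hi₀ k₀ hk₀ hne hlt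
        exact absurd hU (not_lt.mpr (hmax' i' hi' k₀ hk₀))
      have hT' : Function.update T i₀ d = S' := by
        apply hS'uniq
        refine ⟨?_, ?_, ?_⟩
        · intro i
          constructor
          · intro hi
            obtain ⟨hine, hiI⟩ := Finset.mem_erase.mp hi
            rw [Function.update_of_ne hine]
            refine Finset.mem_erase.mpr ⟨?_, (hT1 i).1 hiI⟩
            intro he
            exact hine (hT2 (by simpa using hiI) (by simpa using hi₀) (he.trans hTi₀.symm))
          · intro hi
            by_cases h : i = i₀
            · subst h; simp
            · rw [Function.update_of_ne h]
              exact (hT1 i).2 (fun hiI => hi (Finset.mem_erase.mpr ⟨h, hiI⟩))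
        · intro i hi j hj hij
          simp only [Finset.coe_sort_coe, Finset.mem_coe] at hi hj
          obtain ⟨hine, hiI⟩ := Finset.mem_erase.mp hi
          obtain ⟨hjne, hjI⟩ := Finset.mem_erase.mp hj
          rw [Function.update_of_ne hine, Function.update_of_ne hjne] at hij
          exact hT2 (by simpa using hiI) (by simpa using hjI) hij
        · intro i hi k hk hne hlt
          obtain ⟨hine, hiI⟩ := Finset.mem_erase.mp hi
          obtain ⟨hkne, hkK⟩ := Finset.mem_erase.mp hk
          rw [Function.update_of_ne hine] at hne hlt
          obtain ⟨i', hi', hTi', hU⟩ := hT3 i hiI k hkK hne hlt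
          have hi'ne : i' ≠ i₀ := fun he => hkne (by rw [← hTi', he, hTi₀])
          exact ⟨i', Finset.mem_erase.mpr ⟨hi'ne, hi'⟩,
            by rw [Function.update_of_ne hi'ne]; exact hTi', hU⟩
      funext i
      by_cases h : i = i₀
      · subst h; rw [Function.update_self, hTi₀]
      · rw [Function.update_of_ne h, ← hT', Function.update_of_ne h]

/-- If the entries of an `M × K` real matrix `U` with `M ≤ K` are pairwise
distinct, then there exists exactly one stable matching: an injective
`S : Fin M → Fin K` such that for every user `i` and channel `k` with
`S i ≠ k`, if `U i (S i) < U i k` then some user `i'` has `S i' = k` and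
`U i' k > U i k`. -/
theorem unique_stable_matching (M K : ℕ) (hMK : M ≤ K) (U : Fin M → Fin K → ℝ)
    (hdist : Function.Injective (fun p : Fin M × Fin K => U p.1 p.2)) :
    ∃! S : Fin M → Fin K, Function.Injective S ∧
      ∀ i : Fin M, ∀ k : Fin K, S i ≠ k → U i (S i) < U i k →
        ∃ i' : Fin M, S i' = k ∧ U i' k > U i k := by
  rcases Nat.eq_zero_or_pos M with hM | hM
  · subst hM
    refine ⟨fun i => i.elim0, ⟨fun i => i.elim0, fun i => i.elim0⟩, ?_⟩
    intro T _
    funext i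
    exact i.elim0
  · have hK : 0 < K := lt_of_lt_of_le hM hMK
    have hcard : (Finset.univ : Finset (Fin M)).card ≤ (Finset.univ : Finset (Fin K)).card := by
      simpa using hMK
    obtain ⟨S, ⟨hS1, hS2, hS3⟩, hSuniq⟩ :=
      aux_stable M K U hdist ⟨0, hK⟩ M Finset.univ Finset.univ (by simp) hcard
    refine ⟨S, ⟨?_, ?_⟩, ?_⟩
    · intro i j hij
      exact hS2 (by simp) (by simp) hij
    · intro i k hne hlt
      obtain ⟨i', _, h1, h2⟩ := hS3 i (Finset.mem_univ i) k (Finset.mem_univ k) hne hlt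
      exact ⟨i', h1, h2⟩
    · rintro T ⟨hTinj, hTst⟩
      apply hSuniq
      refine ⟨fun i => ⟨fun _ => Finset.mem_univ _, fun h => absurd (Finset.mem_univ i) h⟩,
        fun i _ j _ hij => hTinj hij, ?_⟩
      intro i _ k _ hne hlt
      obtain ⟨i', h1, h2⟩ := hTst i k hne hlt
      exact ⟨i', Finset.mem_univ i', h1, h2⟩
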